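/- Let λ, μ ≥ 0 with μ > λ, and let h₀ > 0 be such that 1 − e^{−μh} ≥ λh for h ≤ h₀. Define ψ(t) = e^{μ(T−t)}(a + b(T−t)) + c with a, b, c ≥ 0 and 0 ≤ t ≤ t+h ≤ T, h ≤ h₀. Then −h^{−1}(ψ(t+h) − ψ(t)) − λψ(t) ≥ b − λc. -/
import Mathlib


/-- the key computation for Barles–Jakobsen monotonicity:
`−h⁻¹(ψ(t+h) − ψ(t)) − λψ(t) ≥ b − λc` for `ψ(s) = e^{μ(T−s)}(a + b(T−s)) + c`. -/
theorem stmt10 (lam mu h₀ a b c t h T : ℝ)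
    (hlam : 0 ≤ lam) (hmu : lam < mu)
    (hh₀ : 0 < h₀) (hmono : ∀ s : ℝ, 0 ≤ s → s ≤ h₀ → lam * s ≤ 1 - Real.exp (-mu * s))
    (ha : 0 ≤ a) (hb : 0 ≤ b) (hc : 0 ≤ c)
    (ht : 0 ≤ t) (hh : 0 < h) (hhh₀ : h ≤ h₀) (htT : t + h ≤ T)
    (ψ : ℝ → ℝ) (hψ : ∀ s, ψ s = Real.exp (mu * (T - s)) * (a + b * (T - s)) + c) :
    b - lam * c ≤ -(h⁻¹ * (ψ (t + h) - ψ t)) - lam * ψ t := by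
  have hmu0 : 0 ≤ mu := le_trans hlam hmu.le
  have hE : Real.exp (mu * (T - (t + h))) =
      Real.exp (mu * (T - t)) * Real.exp (-mu * h) := by
    rw [← Real.exp_add]; ring_nf
  have hkey : lam * h ≤ 1 - Real.exp (-mu * h) := hmono h hh.le hhh₀
  have hE1 : (1 : ℝ) ≤ Real.exp (mu * (T - t)) := by
    apply Real.one_le_exp
    nlinarith
  have hE2 : (1 : ℝ) ≤ Real.exp (mu * (T - (t + h))) := by
    apply Real.one_le_exp
    nlinarith
  have hEp : 0 < Real.exp (-mu * h) := Real.exp_pos _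
  have hinv : h⁻¹ * h = 1 := inv_mul_cancel₀ hh.ne'
  rw [hψ, hψ, hE]
  have hTt : 0 ≤ T - t - h := by linarith
  -- reduce to multiplied-out inequality
  rw [show -(h⁻¹ * (Real.exp (mu * (T - t)) * Real.exp (-mu * h) * (a + b * (T - (t + h))) + c -
      (Real.exp (mu * (T - t)) * (a + b * (T - t)) + c))) - lam *
      (Real.exp (mu * (T - t)) * (a + b * (T - t)) + c)
    = h⁻¹ * (Real.exp (mu * (T - t)) * ((1 - Real.exp (-mu * h)) * (a + b * (T - t))
        + Real.exp (-mu * h) * (b * h))) - lam * (Real.exp (mu * (T - t)) * (a + b * (T - t)))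
        - lam * c from by ring]
  have habT : 0 ≤ a + b * (T - t) := by nlinarith
  have h1 : lam * h * (a + b * (T - t)) ≤ (1 - Real.exp (-mu * h)) * (a + b * (T - t)) := by
    nlinarith
  have h2 : Real.exp (mu * (T - t)) * (lam * h * (a + b * (T - t)) + Real.exp (-mu * h) * (b * h))
      ≤ Real.exp (mu * (T - t)) * ((1 - Real.exp (-mu * h)) * (a + b * (T - t))
        + Real.exp (-mu * h) * (b * h)) := by
    apply mul_le_mul_of_nonneg_left _ (Real.exp_pos _).le
    linarith
  have h3 : b ≤ Real.exp (mu * (T - t)) * (Real.exp (-mu * h) * b) := by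
    have h3' : b * h ≤ Real.exp (mu * (T - t)) * (Real.exp (-mu * h) * b) * h := by
      have := mul_le_mul_of_nonneg_right hE2 (mul_nonneg hb hh.le)
      rw [hE, one_mul] at this
      calc b * h ≤ Real.exp (mu * (T - t)) * Real.exp (-mu * h) * (b * h) := this
        _ = Real.exp (mu * (T - t)) * (Real.exp (-mu * h) * b) * h := by ring
    exact le_of_mul_le_mul_right h3' hh
  have hinvpos : 0 < h⁻¹ := inv_pos.mpr hh
  have h4 := mul_le_mul_of_nonneg_left h2 hinvpos.le
  have heq : h⁻¹ * (Real.exp (mu * (T - t)) * (lam * h * (a + b * (T - t))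
      + Real.exp (-mu * h) * (b * h)))
      = lam * (Real.exp (mu * (T - t)) * (a + b * (T - t)))
        + Real.exp (mu * (T - t)) * (Real.exp (-mu * h) * b) := by
    field_simp
  rw [heq] at h4
  linarith
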